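/- arXiv:1612.08426 — 2 statements merged into one kernel-verified Lean document; each statement's English description precedes it below -/
import Mathlib

section
/- For the pendulum separatrix solution φ₀(θ) = 4·arctan(exp(θ)) − π, the Melnikov-type integral satisfies ∫_{−∞}^{∞} θ·sin(φ₀(θ))·φ₀'(θ) dθ = 4, the integrand being absolutely integrable on ℝ. -/
/-!
Along the separatrix φ₀' = 2 / cosh θ and sin φ₀ = 2 tanh θ / cosh θ, so the integrand is
4 θ sinh θ / cosh³ θ = -θ · (2 / cosh² θ)'. It is nonnegative, and integrating by parts exhibits
it as the derivative of 2 tanh θ - 2 θ / cosh² θ, which tends to ±2 at ±∞. A nonnegative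
derivative of a function with finite limits at both ends is integrable, and its integral is the
difference of the limits, 2 - (-2) = 4.
-/

open Real MeasureTheory

/-- The pendulum separatrix (heteroclinic) solution. -/
noncomputable def pendulumSeparatrix (θ : ℝ) : ℝ := 4 * Real.arctan (Real.exp θ) - Real.pi

open Filter Topology

theorem integrable_of_hasDerivAt_of_nonneg {f f' : ℝ → ℝ} {m n : ℝ}
    (hderiv : ∀ x, HasDerivAt f (f' x) x) (hf' : ∀ x, 0 ≤ f' x)
    (hbot : Tendsto f atBot (𝓝 m)) (htop : Tendsto f atTop (𝓝 n)) : Integrable f' := by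
  have hmono : Monotone f := monotone_of_hasDerivAt_nonneg hderiv hf'
  have hint (a b : ℝ) : IntervalIntegrable f' volume a b :=
    intervalIntegral.intervalIntegrable_deriv_of_nonneg
      (fun x _ ↦ (hderiv x).continuousAt.continuousWithinAt) (fun x _ ↦ hderiv x) (fun x _ ↦ hf' x)
  refine integrable_of_intervalIntegral_norm_bounded (n - m) (fun r ↦ (hint (-r) r).1)
    tendsto_neg_atTop_atBot tendsto_id (Eventually.of_forall fun r ↦ ?_)
  simp_rw [Real.norm_of_nonneg (hf' _)]
  rw [intervalIntegral.integral_eq_sub_of_hasDerivAt (fun x _ ↦ hderiv x) (hint _ _)]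
  linarith [hmono.ge_of_tendsto htop r, hmono.le_of_tendsto hbot (-r)]

theorem sin_four_mul_arctan_sub_pi (x : ℝ) :
    sin (4 * arctan x - π) = 4 * x * (x ^ 2 - 1) / (1 + x ^ 2) ^ 2 := by
  have hs : √(1 + x ^ 2) ^ 2 = 1 + x ^ 2 := sq_sqrt (by positivity)
  rw [show 4 * arctan x = 2 * (2 * arctan x) by ring, sin_sub_pi, sin_two_mul, sin_two_mul,
    cos_two_mul, sin_arctan, cos_arctan]
  field_simp
  rw [show √(1 + x ^ 2) ^ 4 = (√(1 + x ^ 2) ^ 2) ^ 2 by ring, hs]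
  ring

theorem tendsto_tanh_atTop : Tendsto tanh atTop (𝓝 1) := by
  have hgap (θ : ℝ) : 1 - tanh θ = exp (-θ) / cosh θ := by
    rw [tanh_eq_sinh_div_cosh, one_sub_div (cosh_pos θ).ne', cosh_sub_sinh]
  have h := squeeze_zero (f := fun θ ↦ 1 - tanh θ) (fun θ ↦ by rw [hgap]; positivity)
    (fun θ ↦ by rw [hgap]; exact div_le_self (exp_pos _).le (one_le_cosh θ))
    tendsto_exp_neg_atTop_nhds_zero
  simpa using (tendsto_const_nhds (x := (1 : ℝ))).sub h

theorem tendsto_div_cosh_sq_atTop : Tendsto (fun θ ↦ θ / cosh θ ^ 2) atTop (𝓝 0) := by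
  have hexp : Tendsto (fun θ : ℝ ↦ 2 * (θ ^ 1 * exp (-θ))) atTop (𝓝 0) := by
    simpa using (tendsto_pow_mul_exp_neg_atTop_nhds_zero 1).const_mul 2
  refine squeeze_zero' ?_ ?_ hexp
  · filter_upwards [eventually_ge_atTop 0] with θ hθ
    positivity
  · filter_upwards [eventually_ge_atTop 0] with θ hθ
    have hcosh : exp θ / 2 ≤ cosh θ := by rw [cosh_eq]; linarith [exp_pos (-θ)]
    calc θ / cosh θ ^ 2 ≤ θ / (exp θ / 2) :=
          div_le_div_of_nonneg_left hθ (by positivity) (by nlinarith [one_le_cosh θ])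
      _ = 2 * (θ ^ 1 * exp (-θ)) := by rw [exp_neg]; field_simp

theorem mul_sinh_nonneg (θ : ℝ) : 0 ≤ θ * sinh θ := by
  rcases le_total 0 θ with h | h
  · exact mul_nonneg h (sinh_nonneg_iff.2 h)
  · exact mul_nonneg_of_nonpos_of_nonpos h (sinh_nonpos_iff.2 h)

theorem hasDerivAt_pendulumSeparatrix (θ : ℝ) :
    HasDerivAt pendulumSeparatrix (2 / cosh θ) θ := by
  have h := (((hasDerivAt_exp θ).arctan).const_mul 4).sub_const π
  refine h.congr_deriv ?_
  rw [cosh_eq, exp_neg]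
  field_simp
  ring

theorem sin_pendulumSeparatrix (θ : ℝ) :
    sin (pendulumSeparatrix θ) = 2 * tanh θ / cosh θ := by
  rw [pendulumSeparatrix, sin_four_mul_arctan_sub_pi, tanh_eq_sinh_div_cosh, sinh_eq, cosh_eq,
    exp_neg]
  field_simp
  ring

theorem melnikov_integrand_eq (θ : ℝ) :
    θ * sin (pendulumSeparatrix θ) * deriv pendulumSeparatrix θ = 4 * θ * sinh θ / cosh θ ^ 3 := by
  rw [sin_pendulumSeparatrix, (hasDerivAt_pendulumSeparatrix θ).deriv, tanh_eq_sinh_div_cosh]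
  have := (cosh_pos θ).ne'
  field_simp
  ring

noncomputable def melnikovPrimitive (θ : ℝ) : ℝ := 2 * tanh θ - 2 * θ / cosh θ ^ 2

theorem hasDerivAt_melnikovPrimitive (θ : ℝ) :
    HasDerivAt melnikovPrimitive (4 * θ * sinh θ / cosh θ ^ 3) θ := by
  have hcosh := (cosh_pos θ).ne'
  have hfun : melnikovPrimitive = fun x ↦ 2 * (sinh x / cosh x) - 2 * x / cosh x ^ 2 :=
    funext fun x ↦ by rw [melnikovPrimitive, tanh_eq_sinh_div_cosh]
  have h := (((hasDerivAt_sinh θ).fun_div (hasDerivAt_cosh θ) hcosh).const_mul 2).sub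
    ((hasDerivAt_id' θ |>.const_mul 2).fun_div ((hasDerivAt_cosh θ).fun_pow 2)
      (pow_ne_zero 2 hcosh))
  rw [hfun]
  refine h.congr_deriv ?_
  field_simp
  rw [cosh_sq]
  ring

theorem melnikovPrimitive_neg (θ : ℝ) : melnikovPrimitive (-θ) = -melnikovPrimitive θ := by
  simp only [melnikovPrimitive, tanh_neg, cosh_neg]
  ring

theorem tendsto_melnikovPrimitive_atTop : Tendsto melnikovPrimitive atTop (𝓝 2) := by
  have h := (tendsto_tanh_atTop.const_mul 2).sub (tendsto_div_cosh_sq_atTop.const_mul 2)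
  rw [mul_one, mul_zero, sub_zero] at h
  exact h.congr fun θ ↦ by rw [melnikovPrimitive, mul_div_assoc]

theorem tendsto_melnikovPrimitive_atBot : Tendsto melnikovPrimitive atBot (𝓝 (-2)) := by
  have h := (tendsto_melnikovPrimitive_atTop.comp tendsto_neg_atBot_atTop).neg
  refine h.congr fun θ ↦ ?_
  simp [melnikovPrimitive_neg]

theorem melnikov_integrand_nonneg (θ : ℝ) : 0 ≤ 4 * θ * sinh θ / cosh θ ^ 3 := by
  have := cosh_pos θ
  have := mul_sinh_nonneg θ
  rw [mul_assoc]
  positivity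

/-- the Melnikov-type integral along the pendulum separatrix. -/
theorem pendulum_separatrix_melnikov_integral :
    Integrable (fun θ : ℝ => θ * Real.sin (pendulumSeparatrix θ) * deriv pendulumSeparatrix θ) ∧
    ∫ θ : ℝ, θ * Real.sin (pendulumSeparatrix θ) * deriv pendulumSeparatrix θ = 4 := by
  simp_rw [melnikov_integrand_eq]
  have hint := integrable_of_hasDerivAt_of_nonneg hasDerivAt_melnikovPrimitive
    melnikov_integrand_nonneg tendsto_melnikovPrimitive_atBot tendsto_melnikovPrimitive_atTop
  refine ⟨hint, ?_⟩
  rw [integral_of_hasDerivAt_of_tendsto hasDerivAt_melnikovPrimitive hint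
    tendsto_melnikovPrimitive_atBot tendsto_melnikovPrimitive_atTop]
  norm_num
end

section
/- Let λ > 0 and k ∈ ℤ. There exist ε₀ > 0 and C > 0 such that for every ε with 0 < ε < ε₀ there is a unique φ_k ∈ (π·k − 1, π·k + 1) satisfying the equilibrium equation sin(φ_k) − ε²·λ²/2 + (ε²/2)·sin(2·φ_k) = 0, and moreover |φ_k − π·k − (−1)^k·ε²·λ²/2| ≤ C·ε⁴. -/
/-!
Writing `φ = πk + u`, the equation becomes `sin u + c sin 2u = b` with `b = (-1)^k ε²λ²/2` and
`c = (-1)^k ε²/2`. For small `|b| + |c|` the left side is strictly increasing on `[-1, 1]` and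
has opposite signs at `±1`, so there is exactly one root `u`. From `|u - sin u| ≤ |u|³/6` one
gets first `|u| = O(|b| + |c|)` and then `u - b = (u - sin u) - c sin 2u = O((|b| + |c|)²)`,
which is `O(ε⁴)`.
-/

open Real Set

lemma strictMonoOn_sin_add_mul_sin_two_mul {c : ℝ} (hc : 2 * |c| < cos 1) :
    StrictMonoOn (fun u => sin u + c * sin (2 * u)) (Icc (-1) 1) := by
  refine strictMonoOn_of_deriv_pos (convex_Icc _ _) (by fun_prop) fun u hu => ?_
  rw [interior_Icc] at hu
  have hcos : cos 1 ≤ cos u := by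
    rw [← cos_abs u]
    exact cos_le_cos_of_nonneg_of_le_pi (abs_nonneg u) (by linarith [pi_gt_three])
      (abs_le.2 ⟨hu.1.le, hu.2.le⟩)
  have hderiv : HasDerivAt (fun u => sin u + c * sin (2 * u)) (cos u + 2 * c * cos (2 * u)) u :=
    ((hasDerivAt_sin u).add (((hasDerivAt_id' u).const_mul 2).sin.const_mul c)).congr_deriv
      (by ring)
  have hperturb : |2 * c * cos (2 * u)| ≤ 2 * |c| := by
    rw [abs_mul, abs_mul, abs_two]
    exact mul_le_of_le_one_right (by positivity) (abs_cos_le_one _)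
  rw [hderiv.deriv]
  linarith [neg_abs_le (2 * c * cos (2 * u))]

lemma existsUnique_sin_add_mul_sin_two_mul_eq {b c : ℝ} (hc : 2 * |c| < cos 1)
    (hbc : |b| + |c| < sin 1) :
    ∃! u, u ∈ Ioo (-1) 1 ∧ sin u + c * sin (2 * u) = b := by
  have hperturb (u : ℝ) : |c * sin (2 * u)| ≤ |c| := by
    rw [abs_mul]
    exact mul_le_of_le_one_right (abs_nonneg c) (abs_sin_le_one _)
  have hleft : sin (-1) + c * sin (2 * -1) < b := by
    rw [sin_neg]
    linarith [le_abs_self (c * sin (2 * -1)), hperturb (-1), neg_abs_le b]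
  have hright : b < sin 1 + c * sin (2 * 1) := by
    linarith [neg_abs_le (c * sin (2 * 1)), hperturb 1, le_abs_self b]
  obtain ⟨u, hu, hu_eq⟩ := intermediate_value_Ioo (by norm_num)
    (by fun_prop : Continuous fun u => sin u + c * sin (2 * u)).continuousOn ⟨hleft, hright⟩
  exact ⟨u, ⟨hu, hu_eq⟩, fun v ⟨hv, hv_eq⟩ =>
    (strictMonoOn_sin_add_mul_sin_two_mul hc).injOn (Ioo_subset_Icc_self hv)
      (Ioo_subset_Icc_self hu) (hv_eq.trans hu_eq.symm)⟩

lemma abs_sub_le_of_sin_add_mul_sin_two_mul_eq {b c u : ℝ} (hu : |u| ≤ 1)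
    (h : sin u + c * sin (2 * u) = b) :
    |u - b| ≤ 5 * (|b| + |c|) ^ 2 := by
  have hsin_two : |sin (2 * u)| ≤ 2 * |u| := by
    simpa only [abs_mul, abs_two] using abs_sin_le_abs (x := 2 * u)
  have hperturb : |c * sin (2 * u)| ≤ |c| * (2 * |u|) := by
    rw [abs_mul]
    exact mul_le_mul_of_nonneg_left hsin_two (abs_nonneg c)
  have hcube : |u| ^ 3 ≤ |u| ^ 2 := pow_le_pow_of_le_one (abs_nonneg u) hu (by norm_num)
  have hsin : |sin u| ≤ |b| + |c| := by
    calc |sin u| = |b - c * sin (2 * u)| := by rw [← h, add_sub_cancel_right]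
      _ ≤ |b| + |c * sin (2 * u)| := abs_sub _ _
      _ ≤ |b| + |c| := by
        rw [abs_mul]
        gcongr
        exact mul_le_of_le_one_right (abs_nonneg c) (abs_sin_le_one _)
  have hu_le : |u| ≤ 2 * (|b| + |c|) := by
    have := abs_sub_sin_le u
    have := abs_sub_abs_le_abs_sub u (sin u)
    nlinarith [abs_nonneg u]
  calc |u - b| = |(u - sin u) - c * sin (2 * u)| := by rw [← h]; ring_nf
    _ ≤ |u - sin u| + |c * sin (2 * u)| := abs_sub _ _
    _ ≤ |u| ^ 2 / 6 + |c| * (2 * |u|) := by linarith [abs_sub_sin_le u]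
    _ ≤ 5 * (|b| + |c|) ^ 2 := by nlinarith [abs_nonneg u, abs_nonneg b, abs_nonneg c]

lemma one_half_lt_cos_one : 1 / 2 < cos 1 := by
  rw [← cos_pi_div_three]
  exact cos_lt_cos_of_nonneg_of_le_pi zero_le_one (by linarith [pi_pos])
    (by linarith [pi_gt_three])

lemma sin_sub_add_mul_sin_two_mul_eq_zero_iff (k : ℤ) (φ a d : ℝ) :
    sin φ - a + d * sin (2 * φ) = 0 ↔
      sin (φ - π * k) + (-1) ^ k * d * sin (2 * (φ - π * k)) = (-1) ^ k * a := by
  have hsign : (-1 : ℝ) ^ k * (-1) ^ k = 1 := by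
    rw [← abs_mul_abs_self, abs_neg_one_zpow, one_mul]
  rw [show 2 * (φ - π * k) = 2 * φ - k * (2 * π) by ring, sin_sub_int_mul_two_pi, mul_comm π,
    sin_sub_int_mul_pi]
  constructor <;> intro h
  · linear_combination (-1 : ℝ) ^ k * h
  · linear_combination (-1 : ℝ) ^ k * h - (sin φ - a + d * sin (2 * φ)) * hsign

theorem equilibria_existence_asymptotics_general
    (lam : ℝ) (k : ℤ) :
    ∃ ε₀ > 0, ∃ C > 0, ∀ ε : ℝ, 0 < ε → ε < ε₀ →
      ∃ φk : ℝ, (φk ∈ Set.Ioo (Real.pi * k - 1) (Real.pi * k + 1) ∧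
          Real.sin φk - ε ^ 2 * lam ^ 2 / 2 + (ε ^ 2 / 2) * Real.sin (2 * φk) = 0) ∧
        (∀ y : ℝ, y ∈ Set.Ioo (Real.pi * k - 1) (Real.pi * k + 1) →
          Real.sin y - ε ^ 2 * lam ^ 2 / 2 + (ε ^ 2 / 2) * Real.sin (2 * y) = 0 →
          y = φk) ∧
        |φk - Real.pi * k - (-1 : ℝ) ^ k * ε ^ 2 * lam ^ 2 / 2| ≤ C * ε ^ 4 := by
  refine ⟨√(1 / (2 * (lam ^ 2 + 1))), by positivity, 5 * ((lam ^ 2 + 1) / 2) ^ 2, by positivity,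
    fun ε hε hε₀ => ?_⟩
  have hεM : ε ^ 2 * (lam ^ 2 + 1) < 1 / 2 := by
    rw [lt_sqrt hε.le, lt_div_iff₀ (by positivity)] at hε₀
    linarith
  have hsin_one : 5 / 6 < sin 1 := by linarith [sin_gt_sub_cube one_pos]
  have hb : |(-1 : ℝ) ^ k * (ε ^ 2 * lam ^ 2 / 2)| = ε ^ 2 * lam ^ 2 / 2 := by
    rw [abs_mul, abs_neg_one_zpow, one_mul, abs_of_nonneg (by positivity)]
  have hc : |(-1 : ℝ) ^ k * (ε ^ 2 / 2)| = ε ^ 2 / 2 := by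
    rw [abs_mul, abs_neg_one_zpow, one_mul, abs_of_nonneg (by positivity)]
  obtain ⟨u, ⟨hu, hu_eq⟩, hu_unique⟩ := existsUnique_sin_add_mul_sin_two_mul_eq
    (b := (-1) ^ k * (ε ^ 2 * lam ^ 2 / 2)) (c := (-1) ^ k * (ε ^ 2 / 2))
    (by rw [hc]; nlinarith [one_half_lt_cos_one]) (by rw [hb, hc]; nlinarith)
  have hequation (φ : ℝ) :=
    sin_sub_add_mul_sin_two_mul_eq_zero_iff k φ (ε ^ 2 * lam ^ 2 / 2) (ε ^ 2 / 2)
  refine ⟨π * k + u, ⟨⟨by linarith [hu.1], by linarith [hu.2]⟩, ?_⟩, fun y hy hy_eq => ?_, ?_⟩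
  · rw [hequation, add_sub_cancel_left]
    exact hu_eq
  · have hy_shift : y - π * k ∈ Ioo (-1) 1 := ⟨by linarith [hy.1], by linarith [hy.2]⟩
    linarith [hu_unique (y - π * k) ⟨hy_shift, (hequation y).1 hy_eq⟩]
  · have hbound :=
      abs_sub_le_of_sin_add_mul_sin_two_mul_eq (abs_le.2 ⟨hu.1.le, hu.2.le⟩) hu_eq
    rw [hb, hc] at hbound
    calc |π * k + u - π * k - (-1) ^ k * ε ^ 2 * lam ^ 2 / 2|
        = |u - (-1) ^ k * (ε ^ 2 * lam ^ 2 / 2)| := by ring_nf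
      _ ≤ 5 * (ε ^ 2 * lam ^ 2 / 2 + ε ^ 2 / 2) ^ 2 := hbound
      _ = 5 * ((lam ^ 2 + 1) / 2) ^ 2 * ε ^ 4 := by ring

/-- for small ε there is a unique equilibrium of the unperturbed
parametric resonance equation in (πk − 1, πk + 1), and it satisfies
φ_k = πk + (−1)^k ε²λ²/2 + O(ε⁴). -/
theorem equilibria_existence_asymptotics
    (lam : ℝ) (hlam : 0 < lam) (k : ℤ) :
    ∃ ε₀ > 0, ∃ C > 0, ∀ ε : ℝ, 0 < ε → ε < ε₀ →
      ∃ φk : ℝ, (φk ∈ Set.Ioo (Real.pi * k - 1) (Real.pi * k + 1) ∧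
          Real.sin φk - ε ^ 2 * lam ^ 2 / 2 + (ε ^ 2 / 2) * Real.sin (2 * φk) = 0) ∧
        (∀ y : ℝ, y ∈ Set.Ioo (Real.pi * k - 1) (Real.pi * k + 1) →
          Real.sin y - ε ^ 2 * lam ^ 2 / 2 + (ε ^ 2 / 2) * Real.sin (2 * y) = 0 →
          y = φk) ∧
        |φk - Real.pi * k - (-1 : ℝ) ^ k * ε ^ 2 * lam ^ 2 / 2| ≤ C * ε ^ 4 :=
  equilibria_existence_asymptotics_general lam k
end
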